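/- A convex closed solid set A ⊆ L⁰₊ is convexly compact if and only if it is radially bounded. -/

import Mathlib

open MeasureTheory Filter

variable {Ω : Type*} [MeasurableSpace Ω]

/-- `A ⊆ L⁰₊` is solid: `X ∈ A` and `0 ≤ Y ≤ X` (a.e.) imply `Y ∈ A`. -/
def Solid (P : Measure Ω) (A : Set (Ω → ℝ)) : Prop :=
  ∀ X ∈ A, ∀ Y : Ω → ℝ, (∀ᵐ ω ∂P, 0 ≤ Y ω ∧ Y ω ≤ X ω) → Y ∈ A

/-- Radial boundedness for a set of positive random variables: every ray through a
nonzero element eventually leaves the set. -/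
def RadiallyBoundedPos (P : Measure Ω) (A : Set (Ω → ℝ)) : Prop :=
  ∀ X ∈ A, P {ω | 0 < X ω} ≠ 0 →
    ∃ Λ > (0 : ℝ), ∀ l : ℝ, Λ < l → (fun ω => l * X ω) ∉ A

/-- Tightness (boundedness in probability) for a set of positive random variables. -/
def TightPos (P : Measure Ω) (A : Set (Ω → ℝ)) : Prop :=
  ∀ ε > (0 : ℝ), ∃ M > (0 : ℝ), ∀ X ∈ A, P {ω | M < X ω} < ENNReal.ofReal ε

/-- Radial boundedness for a general set of random variables. -/
def RadiallyBounded (P : Measure Ω) (A : Set (Ω → ℝ)) : Prop :=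
  ∀ X ∈ A, P {ω | X ω ≠ 0} ≠ 0 →
    ∃ Λ > (0 : ℝ), ∀ l : ℝ, Λ < l → (fun ω => l * X ω) ∉ A

/-- Tightness (boundedness in probability) for a general set of random variables. -/
def Tight (P : Measure Ω) (A : Set (Ω → ℝ)) : Prop :=
  ∀ ε > (0 : ℝ), ∃ M > (0 : ℝ), ∀ X ∈ A, P {ω | M < |X ω|} < ENNReal.ofReal ε

/-- Membership in the closure of `A` for the (metrizable) topology of convergence
in probability. -/
def InClosure (P : Measure Ω) (A : Set (Ω → ℝ)) (X : Ω → ℝ) : Prop :=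
  ∃ Y : ℕ → Ω → ℝ, (∀ n, Y n ∈ A) ∧ TendstoInMeasure P Y atTop X

/-- `A` is convexly compact (Žitković): every family of convex, closed (in probability)
subsets of `A` with the finite intersection property has nonempty intersection. -/
def ConvexlyCompact (P : Measure Ω) (A : Set (Ω → ℝ)) : Prop :=
  ∀ (ι : Type) (F : ι → Set (Ω → ℝ)),
    (∀ i, F i ⊆ A) → (∀ i, Convex ℝ (F i)) →
    (∀ i, ∀ X : Ω → ℝ, InClosure P (F i) X → X ∈ F i) →
    (∀ s : Finset ι, (⋂ i ∈ s, F i).Nonempty) →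
    (⋂ i, F i).Nonempty


/-!
(⇒) If a nonzero `X ∈ A` had `λX ∈ A` for arbitrarily large `λ`, solidity would put the whole
ray `{λX : λ ≥ 0}` into `A`; the closed convex sets `{Y ∈ A : Y ≥ nX}` then have the finite
intersection property, but a common element would dominate every `nX`, forcing `X = 0`.

(⇐) Radial boundedness gives tightness. Otherwise `β = lim_M sup_{X ∈ A} P(X > M)` is positive;
pick `f_n ∈ A` with `P(f_n > 2M_n) ≈ β` and `M_n → ∞`. As `(f_n + f_{n+1})/2 ∈ A`, also the union
of `{f_n > 2M_n}` and `{f_{n+1} > 2M_{n+1}}` has probability at most about `β`, so these events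
almost coincide and a tail of them intersects in a set `E` of positive probability, on which every
`f_n` with large `n` is large. Solidity then puts every multiple of `1_E` into `A`.

Tightness gives convex compactness by maximisation: `J(X) = E[X/(1+X)]` is uniformly concave on
tight sets, so along the finite intersections of the family, approximate maximisers of `J` form a
Cauchy sequence in probability, and every member of the family contains approximate maximisers
converging to the same limit.
-/

open Topology

section

variable {P : Measure Ω} {A : Set (Ω → ℝ)}

lemma Convex.fun_add_div_two_mem {α : Type*} {S : Set (α → ℝ)} (hS : Convex ℝ S)
    {Y W : α → ℝ} (hY : Y ∈ S) (hW : W ∈ S) : (fun x => (Y x + W x) / 2) ∈ S := by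
  convert hS hY hW (by norm_num : (0 : ℝ) ≤ 1 / 2) (by norm_num : (0 : ℝ) ≤ 1 / 2)
    (by norm_num) using 1
  ext x
  simp only [Pi.add_apply, Pi.smul_apply, smul_eq_mul]
  ring

lemma ae_le_of_tendstoInMeasure {g L : Ω → ℝ} {Y : ℕ → Ω → ℝ}
    (hY : TendstoInMeasure P Y atTop L) (hle : ∀ n, ∀ᵐ ω ∂P, g ω ≤ Y n ω) :
    ∀ᵐ ω ∂P, g ω ≤ L ω := by
  obtain ⟨ns, -, hns⟩ := hY.exists_seq_tendsto_ae
  filter_upwards [hns, ae_all_iff.2 hle] with ω hω hle using ge_of_tendsto' hω fun k => hle (ns k)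

lemma convex_setOf_ae_le (g : Ω → ℝ) : Convex ℝ {Y : Ω → ℝ | ∀ᵐ ω ∂P, g ω ≤ Y ω} := by
  intro Y₁ (h₁ : ∀ᵐ ω ∂P, g ω ≤ Y₁ ω) Y₂ (h₂ : ∀ᵐ ω ∂P, g ω ≤ Y₂ ω) a b ha hb hab
  filter_upwards [h₁, h₂] with ω h₁ h₂ using convex_Ici (g ω) h₁ h₂ ha hb hab

lemma ae_nonpos_of_forall_nat_mul_mem (hcc : ConvexlyCompact P A) (hconv : Convex ℝ A)
    (hclosed : ∀ X : Ω → ℝ, InClosure P A X → X ∈ A) {X : Ω → ℝ} (hX0 : ∀ᵐ ω ∂P, 0 ≤ X ω)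
    (hX : ∀ n : ℕ, (fun ω => n * X ω) ∈ A) : ∀ᵐ ω ∂P, X ω ≤ 0 := by
  set F : ℕ → Set (Ω → ℝ) := fun n => A ∩ {Y | ∀ᵐ ω ∂P, n * X ω ≤ Y ω}
  have hF_closed : ∀ n, ∀ Y, InClosure P (F n) Y → Y ∈ F n := fun n Y ⟨Z, hZ, hZY⟩ =>
    ⟨hclosed Y ⟨Z, fun k => (hZ k).1, hZY⟩, ae_le_of_tendstoInMeasure hZY fun k => (hZ k).2⟩
  have hF_fip : ∀ s : Finset ℕ, (⋂ n ∈ s, F n).Nonempty := by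
    intro s
    refine ⟨fun ω => (s.sup id : ℕ) * X ω, Set.mem_iInter₂.2 fun n hn => ⟨hX _, ?_⟩⟩
    filter_upwards [hX0] with ω hω
    exact mul_le_mul_of_nonneg_right (by exact_mod_cast Finset.le_sup (f := id) hn) hω
  obtain ⟨Y, hY⟩ := hcc ℕ F (fun _ => Set.inter_subset_left)
    (fun n => hconv.inter (convex_setOf_ae_le _)) hF_closed hF_fip
  filter_upwards [ae_all_iff.2 fun n => (Set.mem_iInter.1 hY n).2] with ω hω
  by_contra! hXω
  obtain ⟨n, hn⟩ := exists_nat_gt (Y ω / X ω)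
  rw [div_lt_iff₀ hXω] at hn
  linarith [hω n]

theorem radiallyBoundedPos_of_convexlyCompact (hpos : ∀ X ∈ A, ∀ᵐ ω ∂P, 0 ≤ X ω)
    (hconv : Convex ℝ A) (hclosed : ∀ X : Ω → ℝ, InClosure P A X → X ∈ A)
    (hsolid : Solid P A) (hcc : ConvexlyCompact P A) : RadiallyBoundedPos P A := by
  intro X hX hXne
  by_contra! hray
  have hmul : ∀ n : ℕ, (fun ω => n * X ω) ∈ A := fun n => by
    obtain ⟨l, hl, hlA⟩ := hray (n + 1) (by positivity)
    refine hsolid _ hlA _ ((hpos X hX).mono fun ω hω => ⟨by positivity, ?_⟩)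
    exact mul_le_mul_of_nonneg_right (by linarith) hω
  have hX_nonpos := ae_nonpos_of_forall_nat_mul_mem hcc hconv hclosed (hpos X hX) hmul
  exact hXne (measure_eq_zero_iff_ae_notMem.2 (hX_nonpos.mono fun ω hω => hω.not_gt))

lemma le_measureReal_iInter [IsFiniteMeasure P] {U : ℕ → Set Ω}
    (hU : ∀ n, NullMeasurableSet (U n) P) {β r : ℝ} (hr : 0 ≤ r)
    (hlow : ∀ n, β - r / 2 ^ n ≤ P.real (U n))
    (hup : ∀ n, P.real (U n ∪ U (n + 1)) ≤ β + r / 2 ^ n) :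
    β - 4 * r ≤ P.real (⋂ n, U n) := by
  set D : ℕ → Set Ω := fun m => ⋂ k ≤ m, U k
  -- by inclusion–exclusion, intersecting with `U (m + 1)` costs at most `3 r / 2 ^ (m + 1)`
  have hD : ∀ m, β - 4 * r + 3 * r / 2 ^ m ≤ P.real (D m) := by
    intro m
    induction m with
    | zero =>
      have hD0 : D 0 = U 0 := by simp [D]
      simpa [hD0] using by linarith [hlow 0]
    | succ m ih =>
      have hunion : D m ∪ U (m + 1) ⊆ U m ∪ U (m + 1) :=
        Set.union_subset_union_left _ (Set.iInter₂_subset (s := fun k (_ : k ≤ m) => U k) m le_rfl)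
      have hincl := measureReal_union_add_inter₀ (μ := P) (s := D m) (hU (m + 1))
      have hup' := (measureReal_mono hunion).trans (hup m)
      have hlow' := hlow (m + 1)
      rw [show D (m + 1) = D m ∩ U (m + 1) from Set.biInter_le_succ U m]
      rw [pow_succ, ← div_div] at hlow' ⊢
      rw [mul_div_assoc] at ih ⊢
      linarith
  have hD_anti : Antitone D := fun m n hmn =>
    Set.biInter_mono (fun k hk => le_trans hk hmn) fun _ _ => subset_rfl
  have hlim := (ENNReal.tendsto_toReal (measure_ne_top P _)).comp
    (tendsto_measure_iInter_atTop (fun m => .iInter fun k => .iInter fun _ => hU k) hD_anti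
      ⟨0, measure_ne_top P _⟩)
  rw [Set.biInter_le_eq_iInter] at hlim
  exact ge_of_tendsto' hlim fun m => (le_add_of_nonneg_right (by positivity)).trans (hD m)

noncomputable def tailSup (P : Measure Ω) (A : Set (Ω → ℝ)) (M : ℝ) : ℝ :=
  sSup ((fun X => P.real {ω | M < X ω}) '' A)

lemma measureReal_le_tailSup [IsFiniteMeasure P] {X : Ω → ℝ} (hX : X ∈ A) (M : ℝ) :
    P.real {ω | M < X ω} ≤ tailSup P A M :=
  le_csSup ⟨P.real Set.univ, by rintro _ ⟨Y, -, rfl⟩; exact measureReal_mono (Set.subset_univ _)⟩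
    (Set.mem_image_of_mem _ hX)

lemma tailSup_nonneg (M : ℝ) : 0 ≤ tailSup P A M :=
  Real.sSup_nonneg fun _ ⟨_, _, hr⟩ => hr ▸ measureReal_nonneg

lemma antitone_tailSup [IsFiniteMeasure P] (hA : A.Nonempty) : Antitone (tailSup P A) :=
  fun _ _ hMM' => csSup_le (hA.image _) fun _ ⟨X, hX, hr⟩ => hr ▸
    (measureReal_mono fun _ (hω : _ < X _) => hMM'.trans_lt hω).trans (measureReal_le_tailSup hX _)

lemma tightPos_of_tendsto_tailSup [IsFiniteMeasure P] (h : Tendsto (tailSup P A) atTop (𝓝 0)) :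
    TightPos P A := by
  intro ε hε
  obtain ⟨M, hMε, hM⟩ := ((h.eventually (gt_mem_nhds hε)).and (eventually_gt_atTop 0)).exists
  exact ⟨M, hM, fun X hX => (ENNReal.lt_ofReal_iff_toReal_lt (measure_ne_top _ _)).2
    ((measureReal_le_tailSup hX M).trans_lt hMε)⟩

lemma measureReal_union_le_tailSup [IsFiniteMeasure P] (hconv : Convex ℝ A)
    (hpos : ∀ X ∈ A, ∀ᵐ ω ∂P, 0 ≤ X ω) {f g : Ω → ℝ} (hf : f ∈ A) (hg : g ∈ A) (a b : ℝ) :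
    P.real ({ω | 2 * a < f ω} ∪ {ω | 2 * b < g ω}) ≤ max (tailSup P A a) (tailSup P A b) := by
  rw [← (antitone_tailSup ⟨f, hf⟩).map_min]
  have hmid := hconv.fun_add_div_two_mem hf hg
  refine (ENNReal.toReal_mono (measure_ne_top _ _) (measure_mono_ae ?_)).trans
    (measureReal_le_tailSup hmid _)
  filter_upwards [hpos f hf, hpos g hg] with ω hf0 hg0 hω
  change min a b < (f ω + g ω) / 2
  rcases hω with (hω : 2 * a < f ω) | (hω : 2 * b < g ω)
  · linarith [min_le_left a b]
  · linarith [min_le_right a b]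

lemma exists_seq_of_tendsto_tailSup [IsFiniteMeasure P] (hA : A.Nonempty) {β : ℝ}
    (hβ : Tendsto (tailSup P A) atTop (𝓝 β)) :
    ∃ M : ℕ → ℝ, ∃ f : ℕ → Ω → ℝ, (∀ n : ℕ, n ≤ M n) ∧
      (∀ n, tailSup P A (M n) < β + 1 / 2 ^ n) ∧ (∀ n, f n ∈ A) ∧
      ∀ n, β - 1 / 2 ^ n < P.real {ω | 2 * M n < f n ω} := by
  have hε : ∀ n : ℕ, (0 : ℝ) < 1 / 2 ^ n := fun n => by positivity
  have hM : ∀ n : ℕ, ∃ M : ℝ, tailSup P A M < β + 1 / 2 ^ n ∧ (n : ℝ) ≤ M := fun n =>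
    ((hβ.eventually (gt_mem_nhds (lt_add_of_pos_right β (hε n)))).and
      (eventually_ge_atTop (n : ℝ))).exists
  choose M hM using hM
  have hf : ∀ n : ℕ, ∃ f ∈ A, β - 1 / 2 ^ n < P.real {ω | 2 * M n < f ω} := fun n => by
    obtain ⟨_, ⟨X, hX, rfl⟩, hlt⟩ := exists_lt_of_lt_csSup (hA.image _)
      ((sub_lt_self β (hε n)).trans_le ((antitone_tailSup hA).le_of_tendsto hβ _))
    exact ⟨X, hX, hlt⟩
  choose f hfA hf using hf
  exact ⟨M, f, fun n => (hM n).2, fun n => (hM n).1, hfA, hf⟩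

lemma not_radiallyBoundedPos_of_forall_le_on (hsolid : Solid P A) {E : Set Ω} (hE : P E ≠ 0)
    (hunb : ∀ c : ℝ, ∃ X ∈ A, ∀ᵐ ω ∂P, 0 ≤ X ω ∧ (ω ∈ E → c ≤ X ω)) :
    ¬ RadiallyBoundedPos P A := by
  have hmem : ∀ c ≥ 0, E.indicator (fun _ => c) ∈ A := by
    intro c hc
    obtain ⟨X, hX, hXc⟩ := hunb c
    refine hsolid X hX _ (hXc.mono fun ω ⟨hX0, hXE⟩ => ?_)
    by_cases hω : ω ∈ E
    · simpa [hω] using ⟨hc, hXE hω⟩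
    · simpa [hω] using hX0
  have hsupp : {ω | 0 < E.indicator (fun _ => (1 : ℝ)) ω} = E := by
    ext ω
    by_cases hω : ω ∈ E <;> simp [hω]
  intro hrb
  obtain ⟨Λ, hΛ, hout⟩ := hrb _ (hmem 1 zero_le_one) (by rwa [hsupp])
  refine hout (Λ + 1) (by linarith) ?_
  convert hmem (Λ + 1) (by linarith) using 1
  ext ω
  by_cases hω : ω ∈ E <;> simp [hω]

theorem tightPos_of_radiallyBoundedPos [IsFiniteMeasure P] (hL0 : ∀ X ∈ A, AEMeasurable X P)
    (hpos : ∀ X ∈ A, ∀ᵐ ω ∂P, 0 ≤ X ω) (hconv : Convex ℝ A) (hsolid : Solid P A)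
    (hrb : RadiallyBoundedPos P A) : TightPos P A := by
  rcases A.eq_empty_or_nonempty with rfl | hA
  · exact fun ε hε => ⟨1, one_pos, by simp⟩
  have hβ := tendsto_atTop_ciInf (antitone_tailSup (P := P) hA)
    ⟨0, by rintro _ ⟨M, rfl⟩; exact tailSup_nonneg M⟩
  set β := ⨅ M, tailSup P A M
  rcases (le_ciInf fun M => tailSup_nonneg (P := P) (A := A) M).eq_or_lt with hβ0 | hβ0
  · exact tightPos_of_tendsto_tailSup (hβ0 ▸ hβ)
  exfalso
  obtain ⟨M, f, hM, hM_tail, hfA, hf_tail⟩ := exists_seq_of_tendsto_tailSup hA hβ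
  obtain ⟨N, hN⟩ := exists_pow_lt_of_lt_one (by positivity : 0 < β / 4) one_half_lt_one
  rw [one_div_pow] at hN
  set E := ⋂ k, {ω | 2 * M (N + k) < f (N + k) ω}
  have hE : β - 4 * (1 / 2 ^ N) ≤ P.real E := by
    refine le_measureReal_iInter
      (fun k => nullMeasurableSet_lt aemeasurable_const (hL0 _ (hfA _))) (by positivity)
      (fun k => ?_) (fun k => ?_) <;> rw [div_div, ← pow_add]
    · exact (hf_tail (N + k)).le
    · refine (measureReal_union_le_tailSup hconv hpos (hfA _) (hfA _) _ _).trans ?_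
      refine max_le (hM_tail (N + k)).le ((hM_tail (N + k + 1)).trans_le ?_).le
      gcongr β + 1 / ?_
      exact pow_le_pow_right₀ one_le_two (Nat.le_succ _)
  refine not_radiallyBoundedPos_of_forall_le_on hsolid (E := E) (fun h0 => ?_) (fun c => ?_) hrb
  · have : P.real E = 0 := by simp [measureReal_def, h0]
    linarith
  obtain ⟨k, hk⟩ := exists_nat_ge c
  refine ⟨f (N + k), hfA _, (hpos _ (hfA _)).mono fun ω h0 => ⟨h0, fun hω => ?_⟩⟩
  have h1 : 2 * M (N + k) < f (N + k) ω := Set.mem_iInter.1 hω k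
  have h2 := hM (N + k)
  push_cast at h2
  linarith [N.cast_nonneg (α := ℝ)]

noncomputable def divOneAdd (x : ℝ) : ℝ := x / (1 + x)

lemma divOneAdd_nonneg {x : ℝ} (hx : 0 ≤ x) : 0 ≤ divOneAdd x := by
  unfold divOneAdd
  positivity

lemma divOneAdd_le_one {x : ℝ} (hx : 0 ≤ x) : divOneAdd x ≤ 1 := by
  unfold divOneAdd
  rw [div_le_one (by positivity)]
  linarith

lemma measurable_divOneAdd : Measurable divOneAdd :=
  measurable_id.div (measurable_const.add measurable_id)

lemma divOneAdd_midpoint_sub {a b : ℝ} (ha : 0 ≤ a) (hb : 0 ≤ b) :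
    divOneAdd ((a + b) / 2) - (divOneAdd a + divOneAdd b) / 2
      = (a - b) ^ 2 / (4 * (1 + a) * (1 + b) * (1 + (a + b) / 2)) := by
  unfold divOneAdd
  field_simp
  ring

lemma divOneAdd_midpoint_sub_nonneg {a b : ℝ} (ha : 0 ≤ a) (hb : 0 ≤ b) :
    0 ≤ divOneAdd ((a + b) / 2) - (divOneAdd a + divOneAdd b) / 2 := by
  rw [divOneAdd_midpoint_sub ha hb]
  positivity

lemma le_divOneAdd_midpoint_sub {a b ε M : ℝ} (ha : 0 ≤ a) (hb : 0 ≤ b) (haM : a ≤ M)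
    (hbM : b ≤ M) (hε : 0 ≤ ε) (hab : ε ≤ dist a b) :
    ε ^ 2 / (4 * (1 + M) ^ 3) ≤ divOneAdd ((a + b) / 2) - (divOneAdd a + divOneAdd b) / 2 := by
  rw [divOneAdd_midpoint_sub ha hb]
  have hsq : ε ^ 2 ≤ (a - b) ^ 2 := by
    rw [← sq_abs (a - b)]
    exact pow_le_pow_left₀ hε (Real.dist_eq a b ▸ hab) 2
  have hden : 4 * (1 + a) * (1 + b) * (1 + (a + b) / 2) ≤ 4 * (1 + M) ^ 3 := by
    have hM : 0 ≤ 1 + M := by linarith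
    calc 4 * (1 + a) * (1 + b) * (1 + (a + b) / 2) ≤ 4 * (1 + M) * (1 + M) * (1 + M) := by
          gcongr
          all_goals linarith
      _ = 4 * (1 + M) ^ 3 := by ring
  exact div_le_div₀ (sq_nonneg _) hsq (by positivity) hden

noncomputable def meanDivOneAdd (P : Measure Ω) (X : Ω → ℝ) : ℝ := ∫ ω, divOneAdd (X ω) ∂P

lemma integrable_divOneAdd_comp [IsFiniteMeasure P] {X : Ω → ℝ} (hX : AEMeasurable X P)
    (hX0 : 0 ≤ᵐ[P] X) : Integrable (fun ω => divOneAdd (X ω)) P := by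
  refine (integrable_const (1 : ℝ)).mono'
    (measurable_divOneAdd.comp_aemeasurable hX).aestronglyMeasurable ?_
  filter_upwards [hX0] with ω hω
  rw [Real.norm_eq_abs, abs_of_nonneg (divOneAdd_nonneg hω)]
  exact divOneAdd_le_one hω

lemma meanDivOneAdd_nonneg {X : Ω → ℝ} (hX0 : 0 ≤ᵐ[P] X) : 0 ≤ meanDivOneAdd P X :=
  integral_nonneg_of_ae (hX0.mono fun _ hω => divOneAdd_nonneg hω)

lemma meanDivOneAdd_le_one [IsProbabilityMeasure P] {X : Ω → ℝ} (hX : AEMeasurable X P)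
    (hX0 : 0 ≤ᵐ[P] X) : meanDivOneAdd P X ≤ 1 := by
  calc meanDivOneAdd P X ≤ ∫ _ω, (1 : ℝ) ∂P :=
        integral_mono_ae (integrable_divOneAdd_comp hX hX0) (integrable_const 1)
          (hX0.mono fun _ hω => divOneAdd_le_one hω)
    _ = 1 := by simp

lemma measureReal_le_of_meanDivOneAdd_midpoint_le [IsFiniteMeasure P] {X Z : Ω → ℝ}
    (hX : AEMeasurable X P) (hZ : AEMeasurable Z P) (hX0 : 0 ≤ᵐ[P] X) (hZ0 : 0 ≤ᵐ[P] Z)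
    {ε M η : ℝ} (hε : 0 < ε) (hM : 0 ≤ M)
    (hmid : meanDivOneAdd P (fun ω => (X ω + Z ω) / 2)
      ≤ (meanDivOneAdd P X + meanDivOneAdd P Z) / 2 + η) :
    P.real {ω | ε ≤ dist (X ω) (Z ω)}
      ≤ η / (ε ^ 2 / (4 * (1 + M) ^ 3)) + P.real {ω | M < X ω} + P.real {ω | M < Z ω} := by
  set δ := ε ^ 2 / (4 * (1 + M) ^ 3)
  set g : Ω → ℝ := fun ω =>
    divOneAdd ((X ω + Z ω) / 2) - (divOneAdd (X ω) + divOneAdd (Z ω)) / 2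
  have hg0 : 0 ≤ᵐ[P] g := by
    filter_upwards [hX0, hZ0] with ω hx hz using divOneAdd_midpoint_sub_nonneg hx hz
  have hXi := integrable_divOneAdd_comp hX hX0
  have hZi := integrable_divOneAdd_comp hZ hZ0
  have hmidi : Integrable (fun ω => divOneAdd ((X ω + Z ω) / 2)) P :=
    integrable_divOneAdd_comp ((hX.add hZ).div_const 2)
      (by filter_upwards [hX0, hZ0] with ω hx hz using div_nonneg (add_nonneg hx hz) zero_le_two)
  have havgi : Integrable (fun ω => (divOneAdd (X ω) + divOneAdd (Z ω)) / 2) P :=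
    (hXi.add hZi).div_const 2
  have hg_int : ∫ ω, g ω ∂P ≤ η := by
    simp only [g]
    rw [integral_sub hmidi havgi, integral_div, integral_add hXi hZi]
    unfold meanDivOneAdd at hmid
    linarith
  have hmarkov : δ * P.real {ω | δ ≤ g ω} ≤ η :=
    (mul_meas_ge_le_integral_of_nonneg hg0 (hmidi.sub havgi) δ).trans hg_int
  have hsub : {ω | ε ≤ dist (X ω) (Z ω)}
      ≤ᵐ[P] ({ω | δ ≤ g ω} ∪ {ω | M < X ω} ∪ {ω | M < Z ω} : Set Ω) := by
    filter_upwards [hX0, hZ0] with ω hx hz (hω : ε ≤ dist (X ω) (Z ω))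
    change (δ ≤ g ω ∨ M < X ω) ∨ M < Z ω
    by_contra! hout
    exact hout.1.1.not_ge (le_divOneAdd_midpoint_sub hx hz hout.1.2 hout.2 hε.le hω)
  calc P.real {ω | ε ≤ dist (X ω) (Z ω)}
      ≤ P.real ({ω | δ ≤ g ω} ∪ {ω | M < X ω} ∪ {ω | M < Z ω}) :=
        ENNReal.toReal_mono (measure_ne_top _ _) (measure_mono_ae hsub)
    _ ≤ P.real {ω | δ ≤ g ω} + P.real {ω | M < X ω} + P.real {ω | M < Z ω} :=
        (measureReal_union_le _ _).trans (by gcongr; exact measureReal_union_le _ _)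
    _ ≤ η / δ + P.real {ω | M < X ω} + P.real {ω | M < Z ω} := by
        gcongr
        rw [le_div_iff₀ (by positivity), mul_comm]
        exact hmarkov

lemma MeasureTheory.TendstoInMeasure.of_tendsto_measureReal_dist [IsFiniteMeasure P]
    {γ : Type*} {l : Filter γ} {X Z : γ → Ω → ℝ} {L : Ω → ℝ} (hX : TendstoInMeasure P X l L)
    (hXZ : ∀ ε > 0, Tendsto (fun k => P.real {ω | ε ≤ dist (X k ω) (Z k ω)}) l (𝓝 0)) :
    TendstoInMeasure P Z l L := by
  rw [tendstoInMeasure_iff_measureReal_dist] at hX ⊢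
  intro ε hε
  have hsub : ∀ k, {ω | ε ≤ dist (Z k ω) (L ω)}
      ⊆ {ω | ε / 2 ≤ dist (X k ω) (Z k ω)} ∪ {ω | ε / 2 ≤ dist (X k ω) (L ω)} := by
    intro k ω (hω : ε ≤ dist (Z k ω) (L ω))
    by_contra! hout
    simp only [Set.mem_union, Set.mem_ofPred_eq, not_or, not_le] at hout
    linarith [dist_triangle_left (Z k ω) (L ω) (X k ω)]
  refine squeeze_zero (fun _ => measureReal_nonneg)
    (fun k => (measureReal_mono (hsub k)).trans (measureReal_union_le _ _)) ?_
  simpa using (hXZ _ (half_pos hε)).add (hX _ (half_pos hε))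

lemma ae_exists_tendsto_of_measureReal_dist_succ_le [IsFiniteMeasure P] {Y : ℕ → Ω → ℝ}
    (hY : ∀ k, P.real {ω | (1 / 2 : ℝ) ^ k ≤ dist (Y k ω) (Y (k + 1) ω)} ≤ (1 / 2) ^ k) :
    ∀ᵐ ω ∂P, ∃ l, Tendsto (fun k => Y k ω) atTop (𝓝 l) := by
  have hsum : ∑' k, P {ω | (1 / 2 : ℝ) ^ k ≤ dist (Y k ω) (Y (k + 1) ω)} ≠ ⊤ := by
    refine ne_top_of_le_ne_top (ENNReal.ofReal_ne_top (r := ∑' k : ℕ, (1 / 2 : ℝ) ^ k)) ?_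
    rw [ENNReal.ofReal_tsum_of_nonneg (fun k => by positivity) summable_geometric_two]
    refine ENNReal.tsum_le_tsum fun k => ?_
    rw [← ENNReal.ofReal_toReal (measure_ne_top P _)]
    exact ENNReal.ofReal_le_ofReal (hY k)
  filter_upwards [ae_eventually_notMem hsum] with ω hω
  have hsummable : Summable fun k => dist (Y k ω) (Y (k + 1) ω) := by
    refine Summable.of_norm_bounded_eventually_nat summable_geometric_two ?_
    filter_upwards [hω] with k hk
    rw [Real.norm_of_nonneg dist_nonneg]
    exact (not_le.1 hk).le
  exact cauchySeq_tendsto_of_complete (cauchySeq_of_summable_dist hsummable)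

lemma exists_tendstoInMeasure_of_cauchy [IsFiniteMeasure P] {X : ℕ → Ω → ℝ}
    (hX : ∀ n, AEMeasurable (X n) P)
    (hcauchy : ∀ ε > 0, Tendsto (fun p : ℕ × ℕ => P.real {ω | ε ≤ dist (X p.1 ω) (X p.2 ω)})
      (atTop ×ˢ atTop) (𝓝 0)) :
    ∃ L, TendstoInMeasure P X atTop L := by
  have hsmall : ∀ k : ℕ, ∀ᶠ n in atTop, ∀ m ≥ n,
      P.real {ω | (1 / 2 : ℝ) ^ k ≤ dist (X n ω) (X m ω)} ≤ (1 / 2) ^ k := by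
    intro k
    have h := (hcauchy ((1 / 2) ^ k) (by positivity)).eventually
      (ge_mem_nhds (by positivity : (0 : ℝ) < (1 / 2) ^ k))
    rw [prod_atTop_atTop_eq] at h
    obtain ⟨N, hN⟩ := eventually_atTop_prod_self'.1 h
    filter_upwards [eventually_ge_atTop N] with n hn m hm using hN n hn m (hn.trans hm)
  obtain ⟨φ, hφ, hφX⟩ := extraction_forall_of_eventually hsmall
  have hae : ∀ᵐ ω ∂P, ∃ l, Tendsto (fun k => X (φ k) ω) atTop (𝓝 l) :=
    ae_exists_tendsto_of_measureReal_dist_succ_le fun k => hφX k _ (hφ (Nat.lt_succ_self k)).le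
  refine ⟨fun ω => limUnder atTop fun k => X (φ k) ω, ?_⟩
  have hsub : TendstoInMeasure P (fun k => X (φ k)) atTop
      (fun ω => limUnder atTop fun k => X (φ k) ω) :=
    tendstoInMeasure_of_tendsto_ae (fun k => (hX (φ k)).aestronglyMeasurable)
      (hae.mono fun _ hω => tendsto_nhds_limUnder hω)
  refine hsub.of_tendsto_measureReal_dist fun ε hε => ?_
  simpa only [Function.comp_def, id_eq] using
    (hcauchy ε hε).comp (hφ.tendsto_atTop.prodMk tendsto_id)

lemma TightPos.exists_measureReal_lt (htight : TightPos P A) {ε : ℝ} (hε : 0 < ε) :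
    ∃ M > 0, ∀ X ∈ A, P.real {ω | M < X ω} < ε := by
  obtain ⟨M, hM, hMA⟩ := htight ε hε
  exact ⟨M, hM, fun X hX => ENNReal.toReal_lt_of_lt_ofReal (hMA X hX)⟩

lemma TightPos.tendsto_measureReal_dist [IsFiniteMeasure P] (htight : TightPos P A)
    (hL0 : ∀ X ∈ A, AEMeasurable X P) (hpos : ∀ X ∈ A, ∀ᵐ ω ∂P, 0 ≤ X ω)
    {γ : Type*} {l : Filter γ} {Y W : γ → Ω → ℝ} (hY : ∀ k, Y k ∈ A) (hW : ∀ k, W k ∈ A)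
    (hmid : ∀ η > 0, ∀ᶠ k in l, meanDivOneAdd P (fun ω => (Y k ω + W k ω) / 2)
      ≤ (meanDivOneAdd P (Y k) + meanDivOneAdd P (W k)) / 2 + η)
    {ε : ℝ} (hε : 0 < ε) :
    Tendsto (fun k => P.real {ω | ε ≤ dist (Y k ω) (W k ω)}) l (𝓝 0) := by
  refine tendsto_order.2 ⟨fun a ha => .of_forall fun _ => ha.trans_le measureReal_nonneg,
    fun ρ hρ => ?_⟩
  obtain ⟨M, hM, hMA⟩ := htight.exists_measureReal_lt (div_pos hρ three_pos)
  set δ := ε ^ 2 / (4 * (1 + M) ^ 3)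
  have hδ : 0 < δ := by positivity
  filter_upwards [hmid (δ * (ρ / 3)) (by positivity)] with k hk
  calc P.real {ω | ε ≤ dist (Y k ω) (W k ω)}
      ≤ δ * (ρ / 3) / δ + P.real {ω | M < Y k ω} + P.real {ω | M < W k ω} :=
        measureReal_le_of_meanDivOneAdd_midpoint_le (hL0 _ (hY k)) (hL0 _ (hW k))
          (hpos _ (hY k)) (hpos _ (hW k)) hε hM.le hk
    _ < ρ / 3 + ρ / 3 + ρ / 3 := by
        rw [mul_div_cancel_left₀ _ hδ.ne']
        gcongr
        · exact hMA _ (hY k)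
        · exact hMA _ (hW k)
    _ = ρ := by ring

lemma exists_approx_minimax {ι α : Type*} {C : Finset ι → Set α} (hC : Antitone C)
    (hne : ∀ s, (C s).Nonempty) {f : α → ℝ} (habove : BddAbove (f '' C ∅))
    (hbelow : BddBelow (f '' C ∅)) :
    ∃ c : ℝ, ∃ s : ℕ → Finset ι, Monotone s ∧ (∀ n, ∀ x ∈ C (s n), f x ≤ c + 1 / (n + 1)) ∧
      ∀ t, ∀ δ > 0, ∃ x ∈ C t, c - δ < f x := by
  classical
  have hsub : ∀ t, f '' C t ⊆ f '' C ∅ := fun t => Set.image_mono (hC (Finset.empty_subset t))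
  set v : Finset ι → ℝ := fun t => sSup (f '' C t)
  have hle_v : ∀ t, ∀ x ∈ C t, f x ≤ v t :=
    fun t x hx => le_csSup (habove.mono (hsub t)) (Set.mem_image_of_mem f hx)
  have hv_bdd : BddBelow (Set.range v) := by
    obtain ⟨b, hb⟩ := hbelow
    refine ⟨b, ?_⟩
    rintro _ ⟨t, rfl⟩
    obtain ⟨x, hx⟩ := hne t
    exact (hb (hsub t (Set.mem_image_of_mem f hx))).trans (hle_v t x hx)
  set c := ⨅ t, v t
  have hlt : ∀ n : ℕ, ∃ t, v t < c + 1 / (n + 1) :=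
    fun n => exists_lt_of_ciInf_lt (lt_add_of_pos_right c (by positivity))
  choose t ht using hlt
  refine ⟨c, fun n => (Finset.range (n + 1)).sup t, fun m n hmn => ?_, fun n x hx => ?_,
    fun u δ hδ => ?_⟩
  · exact Finset.sup_mono (Finset.range_subset_range.2 (by omega))
  · have hx' : x ∈ C (t n) := hC (Finset.le_sup (Finset.self_mem_range_succ n)) hx
    exact (hle_v _ x hx').trans (ht n).le
  · obtain ⟨_, ⟨x, hx, rfl⟩, hlt⟩ := exists_lt_of_lt_csSup ((hne u).image f)
      ((sub_lt_self c hδ).trans_le (ciInf_le hv_bdd u))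
    exact ⟨x, hx, hlt⟩

lemma TightPos.tendsto_measureReal_dist_of_almost_maximizers [IsFiniteMeasure P]
    (htight : TightPos P A) (hL0 : ∀ X ∈ A, AEMeasurable X P)
    (hpos : ∀ X ∈ A, ∀ᵐ ω ∂P, 0 ≤ X ω) {D : ℕ → Set (Ω → ℝ)}
    (hD_conv : ∀ N, Convex ℝ (D N)) {c : ℝ}
    (hD_le : ∀ N, ∀ Y ∈ D N, meanDivOneAdd P Y ≤ c + 1 / (N + 1))
    {γ : Type*} {l : Filter γ} {Y W : γ → Ω → ℝ} (hYA : ∀ k, Y k ∈ A) (hWA : ∀ k, W k ∈ A)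
    (hY : ∀ N : ℕ, ∀ᶠ k in l, Y k ∈ D N ∧ c - 1 / (N + 1) < meanDivOneAdd P (Y k))
    (hW : ∀ N : ℕ, ∀ᶠ k in l, W k ∈ D N ∧ c - 1 / (N + 1) < meanDivOneAdd P (W k))
    {ε : ℝ} (hε : 0 < ε) :
    Tendsto (fun k => P.real {ω | ε ≤ dist (Y k ω) (W k ω)}) l (𝓝 0) := by
  refine htight.tendsto_measureReal_dist hL0 hpos hYA hWA (fun η hη => ?_) hε
  obtain ⟨N, hN⟩ := exists_nat_gt (2 / η)
  have hNη : 2 / ((N : ℝ) + 1) < η := by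
    rw [div_lt_iff₀ (by positivity)]
    rw [div_lt_iff₀ hη] at hN
    nlinarith
  filter_upwards [hY N, hW N] with k ⟨hYD, hYJ⟩ ⟨hWD, hWJ⟩
  have hmid := hD_le N _ ((hD_conv N).fun_add_div_two_mem hYD hWD)
  have h2 : 2 / ((N : ℝ) + 1) = 1 / (N + 1) + 1 / (N + 1) := by ring
  linarith

lemma TightPos.exists_forall_inClosure [IsProbabilityMeasure P] (htight : TightPos P A)
    (hL0 : ∀ X ∈ A, AEMeasurable X P) (hpos : ∀ X ∈ A, ∀ᵐ ω ∂P, 0 ≤ X ω) {ι : Type*}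
    {C : Finset ι → Set (Ω → ℝ)} (hC_anti : Antitone C) (hCA : C ∅ ⊆ A)
    (hC_conv : ∀ s, Convex ℝ (C s)) (hC_ne : ∀ s, (C s).Nonempty) :
    ∃ L, ∀ t, InClosure P (C t) L := by
  classical
  have hCA' : ∀ s, C s ⊆ A := fun s => (hC_anti (Finset.empty_subset s)).trans hCA
  have hJ : meanDivOneAdd P '' C ∅ ⊆ Set.Icc 0 1 := by
    rintro _ ⟨Y, hY, rfl⟩
    exact ⟨meanDivOneAdd_nonneg (hpos Y (hCA hY)),
      meanDivOneAdd_le_one (hL0 Y (hCA hY)) (hpos Y (hCA hY))⟩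
  obtain ⟨c, s, hs, hs_le, hs_gt⟩ :=
    exists_approx_minimax hC_anti hC_ne (bddAbove_Icc.mono hJ) (bddBelow_Icc.mono hJ)
  have htail : ∀ t : ℕ → Finset ι, (∀ n, s n ⊆ t n) → ∀ Y : ℕ → Ω → ℝ, (∀ n, Y n ∈ C (t n)) →
      (∀ n : ℕ, c - 1 / (n + 1) < meanDivOneAdd P (Y n)) → ∀ N : ℕ,
      ∀ᶠ n in atTop, Y n ∈ C (s N) ∧ c - 1 / (N + 1) < meanDivOneAdd P (Y n) := by
    intro t hst Y hYC hYJ N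
    filter_upwards [eventually_ge_atTop N] with n hn
    refine ⟨hC_anti ((hs hn).trans (hst n)) (hYC n), lt_of_le_of_lt ?_ (hYJ n)⟩
    gcongr
  choose X hXC hXJ using fun n : ℕ => hs_gt (s n) (1 / (n + 1)) Nat.one_div_pos_of_nat
  have hX := htail s (fun _ => subset_rfl) X hXC hXJ
  have hcauchy : ∀ ε > 0, Tendsto (fun p : ℕ × ℕ => P.real {ω | ε ≤ dist (X p.1 ω) (X p.2 ω)})
      (atTop ×ˢ atTop) (𝓝 0) := fun ε hε =>
    htight.tendsto_measureReal_dist_of_almost_maximizers hL0 hpos (fun N => hC_conv (s N)) hs_le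
      (Y := fun p : ℕ × ℕ => X p.1) (W := fun p => X p.2) (fun p => hCA' _ (hXC p.1))
      (fun p => hCA' _ (hXC p.2)) (fun N => tendsto_fst.eventually (hX N))
      (fun N => tendsto_snd.eventually (hX N)) hε
  obtain ⟨L, hL⟩ := exists_tendstoInMeasure_of_cauchy (fun n => hL0 _ (hCA' _ (hXC n))) hcauchy
  refine ⟨L, fun t => ?_⟩
  choose Z hZC hZJ using fun n : ℕ => hs_gt (t ∪ s n) (1 / (n + 1)) Nat.one_div_pos_of_nat
  have hZ := htail _ (fun n => Finset.subset_union_right) Z hZC hZJ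
  refine ⟨Z, fun n => hC_anti Finset.subset_union_left (hZC n), ?_⟩
  exact hL.of_tendsto_measureReal_dist fun ε hε =>
    htight.tendsto_measureReal_dist_of_almost_maximizers hL0 hpos (fun N => hC_conv (s N)) hs_le
      (fun n => hCA' _ (hXC n)) (fun n => hCA' _ (hZC n)) hX hZ hε

theorem convexlyCompact_of_tightPos [IsProbabilityMeasure P] (hL0 : ∀ X ∈ A, AEMeasurable X P)
    (hpos : ∀ X ∈ A, ∀ᵐ ω ∂P, 0 ≤ X ω) (htight : TightPos P A) : ConvexlyCompact P A := by
  classical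
  intro ι F hFA hFconv hFclosed hFfip
  rcases isEmpty_or_nonempty ι with hι | ⟨⟨i₀⟩⟩
  · exact ⟨0, by simp⟩
  -- inserting `i₀` makes even the empty intersection a subset of `A`
  obtain ⟨L, hL⟩ := htight.exists_forall_inClosure hL0 hpos (C := fun s => ⋂ i ∈ insert i₀ s, F i)
    (fun s t hst => Set.biInter_subset_biInter_left (Finset.insert_subset_insert i₀ hst))
    ((Set.biInter_subset_of_mem (Finset.mem_insert_self i₀ ∅)).trans (hFA i₀))
    (fun s => convex_iInter₂ fun i _ => hFconv i) (fun s => hFfip _)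
  refine ⟨L, Set.mem_iInter.2 fun i => hFclosed i L ?_⟩
  obtain ⟨Z, hZ, hZL⟩ := hL {i}
  exact ⟨Z, fun n => Set.mem_iInter₂.1 (hZ n) i (by simp), hZL⟩

end

/-- A convex, closed, solid set `A ⊆ L⁰₊` is convexly compact iff it is radially bounded. -/
theorem stmt9 (P : Measure Ω) [IsProbabilityMeasure P] (A : Set (Ω → ℝ))
    (hL0 : ∀ X ∈ A, AEMeasurable X P) (hpos : ∀ X ∈ A, ∀ᵐ ω ∂P, 0 ≤ X ω)
    (hconv : Convex ℝ A) (hclosed : ∀ X : Ω → ℝ, InClosure P A X → X ∈ A)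
    (hsolid : Solid P A) :
    ConvexlyCompact P A ↔ RadiallyBoundedPos P A := by
  refine ⟨radiallyBoundedPos_of_convexlyCompact hpos hconv hclosed hsolid, fun hrb => ?_⟩
  exact convexlyCompact_of_tightPos hL0 hpos
    (tightPos_of_radiallyBoundedPos hL0 hpos hconv hsolid hrb)
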